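/- arXiv:math/0603548 — 3 statements merged into one kernel-verified Lean document; each statement's English description precedes it below -/
import Mathlib

section
/- Let n ≥ 2 and let 0 ≤ i ≤ n − 2. For every g in the subgroup H_n of G_BV there exists h in H_{n+1} such that in G_BV either x_i^{−1} g = h, or x_i^{−1} g = h · x_{i'}^{−1} for some 0 ≤ i' ≤ n − 2. Similarly, for every g in H_n there exists h' in H_{n+1} such that either g · x_i = h', or g · x_i = x_{i'} · h' for some 0 ≤ i' ≤ n − 2. -/
/-- Relator corresponding to the equation `u = v`. -/
def grel {α : Type*} (u v : FreeGroup α) : FreeGroup α := u * v⁻¹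

/-- Generators of the braided Thompson group `BV`.  `s i` denotes `σ_{i+1}` and
`t i` denotes `τ_{i+1}` (so that exactly the generators `σ_i, τ_i` with `i ≥ 1` occur). -/
inductive BVGen : Type
  | x : ℕ → BVGen
  | s : ℕ → BVGen
  | t : ℕ → BVGen

namespace BVGen

/-- The free-group letter `x_i`. -/
def X (i : ℕ) : FreeGroup BVGen := FreeGroup.of (BVGen.x i)

/-- The free-group letter `σ_i` (meaningful for `i ≥ 1`). -/
def S (i : ℕ) : FreeGroup BVGen := FreeGroup.of (BVGen.s (i - 1))

/-- The free-group letter `τ_i` (meaningful for `i ≥ 1`). -/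
def T (i : ℕ) : FreeGroup BVGen := FreeGroup.of (BVGen.t (i - 1))

/-- The defining relations of the braided Thompson group `BV`. -/
def bvRels : Set (FreeGroup BVGen) :=
  { g |
    (∃ i j, i < j ∧ g = grel (X j * X i) (X i * X (j + 1))) ∨
    (∃ i j, 1 ≤ i ∧ i + 2 ≤ j ∧ g = grel (S i * S j) (S j * S i)) ∨
    (∃ i, 1 ≤ i ∧ g = grel (S i * S (i + 1) * S i) (S (i + 1) * S i * S (i + 1))) ∨
    (∃ i j, 1 ≤ i ∧ i + 2 ≤ j ∧ g = grel (S i * T j) (T j * S i)) ∨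
    (∃ i, 1 ≤ i ∧ g = grel (S i * T (i + 1) * S i) (T (i + 1) * S i * T (i + 1))) ∨
    (∃ i j, 1 ≤ i ∧ i < j ∧ g = grel (S i * X j) (X j * S i)) ∨
    (∃ i, 1 ≤ i ∧ g = grel (S i * X i) (X (i - 1) * S (i + 1) * S i)) ∨
    (∃ i j, j + 2 ≤ i ∧ g = grel (S i * X j) (X j * S (i + 1))) ∨
    (∃ i, g = grel (S (i + 1) * X i) (X (i + 1) * S (i + 1) * S (i + 2))) ∨
    (∃ i j, j + 2 ≤ i ∧ g = grel (T i * X j) (X j * T (i + 1))) ∨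
    (∃ i, 1 ≤ i ∧ g = grel (T i * X (i - 1)) (S i * T (i + 1))) ∨
    (∃ i, 1 ≤ i ∧ g = grel (T i) (X (i - 1) * T (i + 1) * S i)) }

end BVGen

/-- The braided Thompson group `BV`, given by its infinite presentation. -/
abbrev GBV : Type := PresentedGroup BVGen.bvRels

namespace GBV

/-- The generator `x_i` of `BV`. -/
def xg (i : ℕ) : GBV := PresentedGroup.of (BVGen.x i)

/-- The generator `σ_i` of `BV` (meaningful for `i ≥ 1`). -/
def sg (i : ℕ) : GBV := PresentedGroup.of (BVGen.s (i - 1))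

/-- The generator `τ_i` of `BV` (meaningful for `i ≥ 1`). -/
def tg (i : ℕ) : GBV := PresentedGroup.of (BVGen.t (i - 1))

/-- H_n: the subgroup of `BV` generated by the B_n generators
`σ_1, …, σ_{n-2}, τ_{n-1}`. -/
def Hn (n : ℕ) : Subgroup GBV :=
  Subgroup.closure ({g | ∃ i, 1 ≤ i ∧ i + 2 ≤ n ∧ g = sg i} ∪ {tg (n - 1)})

end GBV

/-!
Write `K = H_{n+1}`. The claim says that right multiplication by `g ∈ H_n` sends each right
coset `K x_i⁻¹` (`i ≤ n - 2`) into `K` or into some `K x_{i'}⁻¹`. So consider the right cosets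
`K`, `K x_0⁻¹`, …, `K x_{n-2}⁻¹`: the elements of `BV` permuting this finite family form a
subgroup, and it suffices to check that every B_n generator permutes it. For `σ_j` the relations
(C1)–(C4) show that it swaps `K x_{j-1}⁻¹` and `K x_j⁻¹` and fixes the other cosets; for
`τ_{n-1}` the relations (D1)–(D3) show that it swaps `K` and `K x_{n-2}⁻¹` and fixes the others.
-/

namespace Subgroup

variable {G ι : Type*} [Group G]

theorem inv_mul_mul_mem_of_mul_eq (K : Subgroup G) {a x x' b : G} (h : a * x = x' * b)
    (hb : b ∈ K) : x'⁻¹ * a * x ∈ K := by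
  rwa [mul_assoc, h, inv_mul_cancel_left]

/-- The setwise stabilizer of the family of right cosets `K * y i`, `i ∈ I`, under right
multiplication. -/
def cosetFamilyStabilizer (K : Subgroup G) (y : ι → G) (I : Set ι) : Subgroup G where
  carrier := {g | (∀ i ∈ I, ∃ j ∈ I, y i * g * (y j)⁻¹ ∈ K) ∧
    ∀ j ∈ I, ∃ i ∈ I, y i * g * (y j)⁻¹ ∈ K}
  one_mem' := ⟨fun i hi => ⟨i, hi, by simp⟩, fun j hj => ⟨j, hj, by simp⟩⟩
  mul_mem' := by
    rintro a b ⟨ha, ha'⟩ ⟨hb, hb'⟩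
    refine ⟨fun i hi => ?_, fun l hl => ?_⟩
    · obtain ⟨j, hj, haij⟩ := ha i hi
      obtain ⟨l, hl, hbjl⟩ := hb j hj
      exact ⟨l, hl, by simpa [mul_assoc] using K.mul_mem haij hbjl⟩
    · obtain ⟨j, hj, hbjl⟩ := hb' l hl
      obtain ⟨i, hi, haij⟩ := ha' j hj
      exact ⟨i, hi, by simpa [mul_assoc] using K.mul_mem haij hbjl⟩
  inv_mem' := by
    rintro g ⟨hg, hg'⟩
    refine ⟨fun i hi => ?_, fun j hj => ?_⟩
    · obtain ⟨j, hj, hji⟩ := hg' i hi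
      exact ⟨j, hj, by simpa [mul_assoc] using K.inv_mem hji⟩
    · obtain ⟨i, hi, hji⟩ := hg j hj
      exact ⟨i, hi, by simpa [mul_assoc] using K.inv_mem hji⟩

theorem mem_cosetFamilyStabilizer_of_involutive {K : Subgroup G} {y : ι → G} {I : Set ι} {g : G}
    {f : ι → ι} (hf : Function.Involutive f) (hfI : Set.MapsTo f I I)
    (hg : ∀ i ∈ I, y i * g * (y (f i))⁻¹ ∈ K) : g ∈ cosetFamilyStabilizer K y I :=
  ⟨fun i hi => ⟨f i, hfI hi, hg i hi⟩,
    fun j hj => ⟨f j, hfI hj, by simpa only [hf j] using hg (f j) (hfI hj)⟩⟩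

end Subgroup

namespace GBV

theorem sg_mul_xg_of_lt {i j : ℕ} (hi : 1 ≤ i) (hij : i < j) : sg i * xg j = xg j * sg i :=
  PresentedGroup.mk_eq_mk_of_mul_inv_mem <|
    .inr <| .inr <| .inr <| .inr <| .inr <| .inl ⟨i, j, hi, hij, rfl⟩

theorem sg_succ_mul_xg_succ (i : ℕ) : sg (i + 1) * xg (i + 1) = xg i * sg (i + 2) * sg (i + 1) :=
  PresentedGroup.mk_eq_mk_of_mul_inv_mem <|
    .inr <| .inr <| .inr <| .inr <| .inr <| .inr <| .inl ⟨i + 1, i.succ_pos, rfl⟩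

theorem sg_mul_xg_of_add_two_le {i j : ℕ} (h : j + 2 ≤ i) : sg i * xg j = xg j * sg (i + 1) :=
  PresentedGroup.mk_eq_mk_of_mul_inv_mem <|
    .inr <| .inr <| .inr <| .inr <| .inr <| .inr <| .inr <| .inl ⟨i, j, h, rfl⟩

theorem sg_succ_mul_xg (i : ℕ) : sg (i + 1) * xg i = xg (i + 1) * sg (i + 1) * sg (i + 2) :=
  PresentedGroup.mk_eq_mk_of_mul_inv_mem <|
    .inr <| .inr <| .inr <| .inr <| .inr <| .inr <| .inr <| .inr <| .inl ⟨i, rfl⟩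

theorem tg_mul_xg_of_add_two_le {i j : ℕ} (h : j + 2 ≤ i) : tg i * xg j = xg j * tg (i + 1) :=
  PresentedGroup.mk_eq_mk_of_mul_inv_mem <|
    .inr <| .inr <| .inr <| .inr <| .inr <| .inr <| .inr <| .inr <| .inr <| .inl ⟨i, j, h, rfl⟩

theorem tg_succ_mul_xg (i : ℕ) : tg (i + 1) * xg i = sg (i + 1) * tg (i + 2) :=
  PresentedGroup.mk_eq_mk_of_mul_inv_mem <|
    .inr <| .inr <| .inr <| .inr <| .inr <| .inr <| .inr <| .inr <| .inr <| .inr <| .inl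
      ⟨i + 1, i.succ_pos, rfl⟩

theorem tg_succ_eq (i : ℕ) : tg (i + 1) = xg i * tg (i + 2) * sg (i + 1) :=
  PresentedGroup.mk_eq_mk_of_mul_inv_mem <|
    .inr <| .inr <| .inr <| .inr <| .inr <| .inr <| .inr <| .inr <| .inr <| .inr <| .inr
      ⟨i + 1, i.succ_pos, rfl⟩

theorem sg_mem_Hn {n j : ℕ} (hj : 1 ≤ j) (hjn : j + 2 ≤ n) : sg j ∈ Hn n :=
  Subgroup.subset_closure (.inl ⟨j, hj, hjn, rfl⟩)

theorem tg_mem_Hn (m : ℕ) : tg (m + 1) ∈ Hn (m + 2) :=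
  Subgroup.subset_closure (.inr rfl)

/-- `none` stands for the coset `K` itself and `some k` for `K x_k⁻¹`. -/
def cosetRep : Option ℕ → GBV
  | none => 1
  | some k => (xg k)⁻¹

@[simp] theorem cosetRep_none : cosetRep none = 1 := rfl

@[simp] theorem cosetRep_some (k : ℕ) : cosetRep (some k) = (xg k)⁻¹ := rfl

abbrev pushStabilizer (m : ℕ) : Subgroup GBV :=
  (Hn (m + 3)).cosetFamilyStabilizer cosetRep {o | ∀ k ∈ o, k ≤ m}

theorem sg_mem_pushStabilizer {m l : ℕ} (hl : l < m) : sg (l + 1) ∈ pushStabilizer m := by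
  have hσ : ∀ {j}, 1 ≤ j → j ≤ m + 1 → sg j ∈ Hn (m + 3) := fun hj hjm => sg_mem_Hn hj (by omega)
  refine Subgroup.mem_cosetFamilyStabilizer_of_involutive (f := Option.map (Equiv.swap l (l + 1)))
    (fun o => by cases o <;> simp) ?_ ?_
  · rintro (_ | k) hk _ ⟨⟩
    have hkm : k ≤ m := hk k rfl
    rw [Equiv.swap_apply_def]
    split_ifs <;> omega
  · rintro (_ | k) hk
    · simpa using hσ le_add_self (by omega)
    have hkm : k ≤ m := hk k rfl
    simp only [cosetRep_some, Option.map_some, inv_inv]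
    obtain hkl | rfl | rfl | hkl : k < l ∨ k = l ∨ k = l + 1 ∨ l + 1 < k := by omega
    · rw [Equiv.swap_apply_of_ne_of_ne (by omega) (by omega)]
      exact (Hn _).inv_mul_mul_mem_of_mul_eq (sg_mul_xg_of_add_two_le (by omega))
        (hσ le_add_self (by omega))
    · rw [Equiv.swap_apply_left]
      exact (Hn _).inv_mul_mul_mem_of_mul_eq (by rw [sg_succ_mul_xg_succ, mul_assoc])
        (mul_mem (hσ le_add_self (by omega)) (hσ le_add_self (by omega)))
    · rw [Equiv.swap_apply_right]
      exact (Hn _).inv_mul_mul_mem_of_mul_eq (by rw [sg_succ_mul_xg, mul_assoc])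
        (mul_mem (hσ le_add_self (by omega)) (hσ le_add_self (by omega)))
    · rw [Equiv.swap_apply_of_ne_of_ne (by omega) (by omega)]
      exact (Hn _).inv_mul_mul_mem_of_mul_eq (sg_mul_xg_of_lt le_add_self hkl)
        (hσ le_add_self (by omega))

theorem tg_mem_pushStabilizer (m : ℕ) : tg (m + 1) ∈ pushStabilizer m := by
  have hσ : sg (m + 1) ∈ Hn (m + 3) := sg_mem_Hn le_add_self le_rfl
  have hτ : tg (m + 2) ∈ Hn (m + 3) := tg_mem_Hn (m + 1)
  refine Subgroup.mem_cosetFamilyStabilizer_of_involutive (f := Equiv.swap none (some m))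
    (Equiv.swap_apply_self _ _) ?_ ?_
  · rintro (_ | k) hk
    · simp
    rcases eq_or_ne k m with rfl | hkm
    · simp
    · rwa [Equiv.swap_apply_of_ne_of_ne (by simp) (by simpa)]
  · rintro (_ | k) hk
    · simpa [tg_succ_mul_xg] using mul_mem hσ hτ
    rcases eq_or_ne k m with rfl | hkm
    · simpa [tg_succ_eq k, mul_assoc] using mul_mem hτ hσ
    · rw [Equiv.swap_apply_of_ne_of_ne (by simp) (by simpa)]
      simpa [mul_assoc] using (Hn _).inv_mul_mul_mem_of_mul_eq
        (tg_mul_xg_of_add_two_le (i := m + 1) (j := k) (by have := hk k rfl; omega)) hτ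

theorem Hn_le_pushStabilizer (m : ℕ) : Hn (m + 2) ≤ pushStabilizer m := by
  refine (Subgroup.closure_le _).2 (Set.union_subset ?_ (Set.singleton_subset_iff.2 ?_))
  · rintro _ ⟨j, hj, hjm, rfl⟩
    obtain ⟨l, rfl⟩ : ∃ l, j = l + 1 := ⟨j - 1, by omega⟩
    exact sg_mem_pushStabilizer (by omega)
  · exact tg_mem_pushStabilizer m

end GBV

/-- Lemma (push): for `n ≥ 2` and `0 ≤ i ≤ n-2`, every `x_i⁻¹ g` with `g ∈ H_n`
equals `h` or `h * x_{i'}⁻¹` with `h ∈ H_{n+1}` and `i' ≤ n-2`; similarly on the right. -/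
theorem bv_push (n : ℕ) (hn : 2 ≤ n) (i : ℕ) (hi : i ≤ n - 2) :
    (∀ g ∈ GBV.Hn n, ∃ h ∈ GBV.Hn (n + 1),
      (GBV.xg i)⁻¹ * g = h ∨ ∃ i', i' ≤ n - 2 ∧ (GBV.xg i)⁻¹ * g = h * (GBV.xg i')⁻¹) ∧
    (∀ g ∈ GBV.Hn n, ∃ h' ∈ GBV.Hn (n + 1),
      g * GBV.xg i = h' ∨ ∃ i', i' ≤ n - 2 ∧ g * GBV.xg i = GBV.xg i' * h') := by
  obtain ⟨m, rfl⟩ : ∃ m, n = m + 2 := ⟨n - 2, by omega⟩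
  have hI : some i ∈ {o : Option ℕ | ∀ k ∈ o, k ≤ m} := by simpa using hi
  refine ⟨fun g hg => ?_, fun g hg => ?_⟩
  · obtain ⟨_ | i', hi', hmem⟩ := (GBV.Hn_le_pushStabilizer m hg).1 _ hI
    · exact ⟨_, by simpa using hmem, Or.inl rfl⟩
    · exact ⟨_, hmem, Or.inr ⟨i', hi' i' rfl, by simp⟩⟩
  · obtain ⟨_ | i', hi', hmem⟩ := (GBV.Hn_le_pushStabilizer m hg).2 _ hI
    · exact ⟨_, by simpa using hmem, Or.inl rfl⟩
    · exact ⟨_, by simpa using hmem, Or.inr ⟨i', hi' i' rfl, by group⟩⟩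
end

section
/- Let w = w_1 w_2 w_3^{−1} and v = v_1 v_2 v_3^{−1} be blocks with l(w_3) + l(v_1) ≥ 1. Then there exist blocks w' = w_1' w_2' (w_3')^{−1} and v' = v_1' v_2' (v_3')^{−1} such that the concatenations w v and w' v' represent the same element of G_BV and l(v_1') + l(w_3') < l(v_1) + l(w_3). -/
namespace GBV

/-- `N(u)` for a positive x-word given by its list of indices:
`N(empty) = 0`, `N(u x_j) = max (N u + 1) (j + 2)`. -/
def Nval (l : List ℕ) : ℕ := l.foldl (fun acc j => max (acc + 1) (j + 2)) 0

/-- The B_n generators, as letters: `σ_1, …, σ_{n-2}, τ_{n-1}`. -/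
def BnGen (n : ℕ) : Set BVGen :=
  {g | (∃ i, 1 ≤ i ∧ i + 2 ≤ n ∧ g = BVGen.s (i - 1)) ∨ (2 ≤ n ∧ g = BVGen.t (n - 2))}

/-- A block `w₁ w₂ w₃⁻¹`: `w₁` and `w₃` are positive x-words with nondecreasing
indices (i.e. of the form `x_{i₁}^{r₁} ⋯ x_{i_k}^{r_k}` with `i₁ < ⋯ < i_k`, `r_m ≥ 1`),
recorded as lists of indices, and `w₂` is a word in the B_n generators and their
inverses (letters with a sign) for some `n ≥ max (N w₁) (N w₃) + 1`. -/
structure Block where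
  w1 : List ℕ
  w2 : List (BVGen × Bool)
  w3 : List ℕ
  n : ℕ
  h1 : w1.Chain' (· ≤ ·)
  h3 : w3.Chain' (· ≤ ·)
  h2 : ∀ p ∈ w2, p.1 ∈ BnGen n
  hbound : max (Nval w1) (Nval w3) + 1 ≤ n

/-- Evaluation of a positive x-word in `BV`. -/
def evalX (l : List ℕ) : GBV := (l.map xg).prod

/-- Evaluation of a signed word in the generators in `BV`. -/
def evalW (l : List (BVGen × Bool)) : GBV :=
  (l.map (fun p => if p.2 then PresentedGroup.of p.1 else (PresentedGroup.of p.1)⁻¹)).prod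

/-- The element of `BV` represented by a block. -/
def Block.eval (b : Block) : GBV := evalX b.w1 * evalW b.w2 * (evalX b.w3)⁻¹

end GBV

/-!
If `v₁` starts with `x_b`, move `x_b` into `w`. By relation (A) it travels left through `w₃⁻¹`
(sorted), raising its index past smaller letters, until it either cancels a letter of `w₃` or
emerges as some `x_M` with `w₃` replaced by a sorted word of the same length. Relations (C), (D)
then carry `x_M` through the `B_n` word `w₂`, each crossing raising `n` by one, and (A) sorts the
resulting `x`-letters into `w₁`. The bound on `N` survives because each level produces at most one
`x`, of index at most the level minus two. If `v₁` is empty, the same move applies to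
`(w v)⁻¹ = v⁻¹ w⁻¹`, since inverting a block exchanges the roles of `w₁` and `w₃`.
-/

lemma inv_mul_eq_mul_inv_of_mul_eq {G : Type*} [Group G] {a x y u : G} (h : a * x = y * u) :
    a⁻¹ * y = x * u⁻¹ := by
  rw [inv_mul_eq_iff_eq_mul, ← mul_assoc, h, mul_inv_cancel_right]

namespace GBV

open PresentedGroup

section Relations

lemma eq_of_grel_mem {u v : FreeGroup BVGen} {a b : GBV} (h : grel u v ∈ BVGen.bvRels)
    (hu : mk _ u = a) (hv : mk _ v = b) : a = b :=
  hu ▸ hv ▸ mk_eq_mk_of_mul_inv_mem h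

variable {i j : ℕ}

lemma xg_mul_xg_of_lt (h : i < j) : xg j * xg i = xg i * xg (j + 1) :=
  eq_of_grel_mem (Or.inl ⟨i, j, h, rfl⟩) rfl rfl

lemma of_s_mul_xg_of_lt (h : i + 1 < j) :
    (of (.s i) : GBV) * xg j = xg j * of (.s i) :=
  eq_of_grel_mem
    (.inr <| .inr <| .inr <| .inr <| .inr <| .inl ⟨i + 1, j, by omega, h, rfl⟩) rfl rfl

lemma of_s_mul_xg_succ (i : ℕ) :
    (of (.s i) : GBV) * xg (i + 1) = xg i * of (.s (i + 1)) * of (.s i) :=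
  eq_of_grel_mem
    (.inr <| .inr <| .inr <| .inr <| .inr <| .inr <| .inl ⟨i + 1, le_add_self, rfl⟩) rfl rfl

lemma of_s_mul_xg_of_gt (h : j < i) :
    (of (.s i) : GBV) * xg j = xg j * of (.s (i + 1)) :=
  eq_of_grel_mem
    (.inr <| .inr <| .inr <| .inr <| .inr <| .inr <| .inr <| .inl ⟨i + 1, j, by omega, rfl⟩) rfl rfl

lemma of_s_mul_xg_self (i : ℕ) :
    (of (.s i) : GBV) * xg i = xg (i + 1) * of (.s i) * of (.s (i + 1)) :=
  eq_of_grel_mem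
    (.inr <| .inr <| .inr <| .inr <| .inr <| .inr <| .inr <| .inr <| .inl ⟨i, rfl⟩) rfl rfl

lemma of_t_mul_xg_of_lt (h : j < i) :
    (of (.t i) : GBV) * xg j = xg j * of (.t (i + 1)) :=
  eq_of_grel_mem
    (.inr <| .inr <| .inr <| .inr <| .inr <| .inr <| .inr <| .inr <| .inr <| .inl
      ⟨i + 1, j, by omega, rfl⟩) rfl rfl

lemma of_t_mul_xg_self (i : ℕ) :
    (of (.t i) : GBV) * xg i = of (.s i) * of (.t (i + 1)) :=
  eq_of_grel_mem
    (.inr <| .inr <| .inr <| .inr <| .inr <| .inr <| .inr <| .inr <| .inr <| .inr <| .inl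
      ⟨i + 1, le_add_self, rfl⟩) rfl rfl

lemma of_t_eq (i : ℕ) : (of (.t i) : GBV) = xg i * of (.t (i + 1)) * of (.s i) :=
  eq_of_grel_mem
    (.inr <| .inr <| .inr <| .inr <| .inr <| .inr <| .inr <| .inr <| .inr <| .inr <| .inr
      ⟨i + 1, le_add_self, rfl⟩) rfl rfl

def evalLetter (p : BVGen × Bool) : GBV := if p.2 then of p.1 else (of p.1)⁻¹

/-! For an inverted letter each crossing is a relation read backwards, with (C2) and (C4)
exchanging roles, as do (D2) and (D3). -/

lemma evalLetter_s_mul_xg_of_lt (b : Bool) (h : i + 1 < j) :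
    evalLetter (.s i, b) * xg j = xg j * evalLetter (.s i, b) := by
  cases b
  · exact inv_mul_eq_mul_inv_of_mul_eq (of_s_mul_xg_of_lt h)
  · exact of_s_mul_xg_of_lt h

lemma evalLetter_s_mul_xg_succ (b : Bool) (i : ℕ) :
    evalLetter (.s i, b) * xg (i + 1) =
      xg i * evalLetter (.s (i + 1), b) * evalLetter (.s i, b) := by
  cases b
  · simpa [evalLetter, mul_assoc] using
      inv_mul_eq_mul_inv_of_mul_eq ((of_s_mul_xg_self i).trans (mul_assoc _ _ _))
  · exact of_s_mul_xg_succ i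

lemma evalLetter_s_mul_xg_self (b : Bool) (i : ℕ) :
    evalLetter (.s i, b) * xg i =
      xg (i + 1) * evalLetter (.s i, b) * evalLetter (.s (i + 1), b) := by
  cases b
  · simpa [evalLetter, mul_assoc] using
      inv_mul_eq_mul_inv_of_mul_eq ((of_s_mul_xg_succ i).trans (mul_assoc _ _ _))
  · exact of_s_mul_xg_self i

lemma evalLetter_s_mul_xg_of_gt (b : Bool) (h : j < i) :
    evalLetter (.s i, b) * xg j = xg j * evalLetter (.s (i + 1), b) := by
  cases b
  · exact inv_mul_eq_mul_inv_of_mul_eq (of_s_mul_xg_of_gt h)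
  · exact of_s_mul_xg_of_gt h

lemma evalLetter_t_mul_xg_of_lt (b : Bool) (h : j < i) :
    evalLetter (.t i, b) * xg j = xg j * evalLetter (.t (i + 1), b) := by
  cases b
  · exact inv_mul_eq_mul_inv_of_mul_eq (of_t_mul_xg_of_lt h)
  · exact of_t_mul_xg_of_lt h

lemma evalLetter_t_mul_xg_self (b : Bool) (i : ℕ) :
    evalLetter (.t i, b) * xg i = evalLetter (.s i, b) * evalLetter (.t (i + 1), b) := by
  cases b
  · simpa [evalLetter] using
      inv_mul_eq_mul_inv_of_mul_eq ((mul_one _).trans ((of_t_eq i).trans (mul_assoc _ _ _)))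
  · exact of_t_mul_xg_self i

lemma evalLetter_t_eq (b : Bool) (i : ℕ) :
    evalLetter (.t i, b) = xg i * evalLetter (.t (i + 1), b) * evalLetter (.s i, b) := by
  cases b
  · simpa [evalLetter, mul_assoc] using
      inv_mul_eq_mul_inv_of_mul_eq ((of_t_mul_xg_self i).trans (one_mul _).symm)
  · exact of_t_eq i

end Relations

section Words

@[simp] lemma evalX_nil : evalX [] = 1 := rfl

@[simp] lemma evalX_cons (c : ℕ) (l : List ℕ) : evalX (c :: l) = xg c * evalX l :=
  List.prod_cons

@[simp] lemma evalX_append (l₁ l₂ : List ℕ) : evalX (l₁ ++ l₂) = evalX l₁ * evalX l₂ := by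
  simp [evalX]

@[simp] lemma evalW_nil : evalW [] = 1 := rfl

@[simp] lemma evalW_cons (p : BVGen × Bool) (l : List (BVGen × Bool)) :
    evalW (p :: l) = evalLetter p * evalW l :=
  List.prod_cons

@[simp] lemma evalW_append (l₁ l₂ : List (BVGen × Bool)) :
    evalW (l₁ ++ l₂) = evalW l₁ * evalW l₂ := by
  simp [evalW]

def invWord (W : List (BVGen × Bool)) : List (BVGen × Bool) :=
  (W.map fun p => (p.1, !p.2)).reverse

lemma evalW_invWord (W : List (BVGen × Bool)) : evalW (invWord W) = (evalW W)⁻¹ := by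
  induction W with
  | nil => rfl
  | cons p W ih =>
    obtain ⟨g, _ | _⟩ := p <;> simp_all [invWord, evalLetter]

lemma mem_invWord {W : List (BVGen × Bool)} {p : BVGen × Bool} (hp : p ∈ invWord W) :
    (p.1, !p.2) ∈ W := by
  simp only [invWord, List.mem_reverse, List.mem_map] at hp
  obtain ⟨q, hq, rfl⟩ := hp
  simpa using hq

end Words

section NBound

def nstep (acc j : ℕ) : ℕ := max (acc + 1) (j + 2)

def nfold (l : List ℕ) (acc : ℕ) : ℕ := l.foldl nstep acc

lemma Nval_eq_nfold (l : List ℕ) : Nval l = nfold l 0 := rfl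

@[simp] lemma nfold_nil (acc : ℕ) : nfold [] acc = acc := rfl

@[simp] lemma nfold_cons (c : ℕ) (l : List ℕ) (acc : ℕ) :
    nfold (c :: l) acc = nfold l (nstep acc c) := rfl

lemma nfold_append (l₁ l₂ : List ℕ) (acc : ℕ) :
    nfold (l₁ ++ l₂) acc = nfold l₂ (nfold l₁ acc) :=
  List.foldl_append

lemma nfold_mono (l : List ℕ) {acc acc' : ℕ} (h : acc ≤ acc') : nfold l acc ≤ nfold l acc' := by
  induction l generalizing acc acc' with
  | nil => exact h
  | cons c l ih => exact ih (by simp only [nstep]; omega)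

lemma nfold_le_of_sublist {l' l : List ℕ} (h : l'.Sublist l) (acc : ℕ) :
    nfold l' acc ≤ nfold l acc := by
  induction h generalizing acc with
  | slnil => rfl
  | cons c _ ih => exact (ih acc).trans (nfold_mono _ (by simp only [nstep]; omega))
  | cons_cons c _ ih => exact ih _

lemma Nval_le_of_sublist {l' l : List ℕ} (h : l'.Sublist l) : Nval l' ≤ Nval l :=
  nfold_le_of_sublist h 0

lemma nfold_map_succ_le (l : List ℕ) {acc acc' : ℕ} (h : acc' ≤ acc + 1) :
    nfold (l.map (· + 1)) acc' ≤ nfold l acc + 1 := by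
  induction l generalizing acc acc' with
  | nil => exact h
  | cons c l ih => exact ih (by simp only [nstep]; omega)

/-- `N` is unchanged by the rewriting `x_c x_j → x_j x_{c+1}` (`j < c`) of relation (A). -/
lemma nfold_cons_map_succ {j : ℕ} (l : List ℕ) (hl : ∀ e ∈ l, j < e) (acc : ℕ) :
    nfold (j :: l.map (· + 1)) acc = nfold (l ++ [j]) acc := by
  induction l generalizing acc with
  | nil => rfl
  | cons c l ih =>
    have hc : nstep (nstep acc j) (c + 1) = nstep (nstep acc c) j := by
      have := hl c List.mem_cons_self
      simp only [nstep]; omega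
    simp only [List.map_cons, nfold_cons, List.cons_append, hc]
    exact ih (fun e he => hl e (List.mem_cons_of_mem c he)) _

lemma nfold_toList_lt {m acc : ℕ} {o : Option ℕ} (ho : ∀ j ∈ o, j + 2 ≤ m) (hacc : acc < m) :
    nfold o.toList acc < m + 1 := by
  rcases o with _ | j
  · simpa using hacc.trans (Nat.lt_succ_self m)
  · have := ho j rfl
    simp only [Option.toList_some, nfold_cons, nfold_nil, nstep]
    omega

end NBound

section SortedWords

lemma evalX_mul_xg_of_lt {j : ℕ} (l : List ℕ) (hl : ∀ e ∈ l, j < e) :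
    evalX l * xg j = xg j * evalX (l.map (· + 1)) := by
  induction l with
  | nil => simp
  | cons c l ih =>
    simp only [evalX_cons, List.map_cons, mul_assoc,
      ih (fun e he => hl e (List.mem_cons_of_mem c he))]
    rw [← mul_assoc, xg_mul_xg_of_lt (hl c List.mem_cons_self), mul_assoc]

lemma inv_xg_mul_xg_of_lt {c b : ℕ} (h : c < b) : (xg c)⁻¹ * xg b = xg (b + 1) * (xg c)⁻¹ :=
  inv_mul_eq_mul_inv_of_mul_eq (xg_mul_xg_of_lt h).symm

/-- Relation (A) raises the index of `x_b` past each smaller letter, until it either cancels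
against an equal one or passes all remaining, larger letters and raises their indices. -/
lemma inv_evalX_mul_xg {l : List ℕ} (hl : l.Pairwise (· ≤ ·)) (b : ℕ) :
    (∃ l₁ c l₂, l = l₁ ++ c :: l₂ ∧ (evalX l)⁻¹ * xg b = (evalX (l₁ ++ l₂))⁻¹) ∨
    (∃ M l₁ l₂, l = l₁ ++ l₂ ∧
      (evalX l)⁻¹ * xg b = xg M * (evalX (l₁ ++ l₂.map (· + 1)))⁻¹) := by
  induction l generalizing b with
  | nil => exact .inr ⟨b, [], [], rfl, by simp⟩
  | cons c l ih =>
    obtain ⟨hc, hl⟩ := List.pairwise_cons.mp hl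
    rcases lt_trichotomy b c with hbc | rfl | hcb
    · refine .inr ⟨b, [], c :: l, rfl, ?_⟩
      exact inv_mul_eq_mul_inv_of_mul_eq (evalX_mul_xg_of_lt (c :: l)
        (by simpa using ⟨hbc, fun e he => hbc.trans_le (hc e he)⟩))
    · exact .inl ⟨[], b, l, rfl, by simp [mul_assoc]⟩
    · have hstep : (evalX (c :: l))⁻¹ * xg b = (evalX l)⁻¹ * xg (b + 1) * (xg c)⁻¹ := by
        simp only [evalX_cons, mul_inv_rev, mul_assoc, inv_xg_mul_xg_of_lt hcb]
      rcases ih hl (b + 1) with ⟨l₁, c', l₂, rfl, h⟩ | ⟨M, l₁, l₂, rfl, h⟩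
      · exact .inl ⟨c :: l₁, c', l₂, rfl, by rw [hstep, h]; simp⟩
      · exact .inr ⟨M, c :: l₁, l₂, rfl, by rw [hstep, h]; simp [mul_assoc]⟩

lemma exists_split_of_pairwise {l : List ℕ} (hl : l.Pairwise (· ≤ ·)) (j : ℕ) :
    ∃ l₁ l₂, l = l₁ ++ l₂ ∧ (∀ e ∈ l₁, e ≤ j) ∧ ∀ e ∈ l₂, j < e := by
  induction l with
  | nil => exact ⟨[], [], rfl, by simp, by simp⟩
  | cons c l ih =>
    obtain ⟨hc, hl⟩ := List.pairwise_cons.mp hl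
    by_cases hcj : c ≤ j
    · obtain ⟨l₁, l₂, rfl, h₁, h₂⟩ := ih hl
      exact ⟨c :: l₁, l₂, rfl, by simpa using ⟨hcj, h₁⟩, h₂⟩
    · refine ⟨[], c :: l, rfl, by simp, ?_⟩
      simpa using ⟨by omega, fun e he => by have := hc e he; omega⟩

lemma exists_pairwise_evalX_eq_mul_xg {l : List ℕ} (hl : l.Pairwise (· ≤ ·)) (j : ℕ) :
    ∃ l', l'.Pairwise (· ≤ ·) ∧ evalX l' = evalX l * xg j ∧ Nval l' = Nval (l ++ [j]) := by
  obtain ⟨l₁, l₂, rfl, h₁, h₂⟩ := exists_split_of_pairwise hl j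
  refine ⟨l₁ ++ j :: l₂.map (· + 1), ?_, ?_, ?_⟩
  · have hl₂ := (List.pairwise_append.mp hl).2.1
    simp only [List.pairwise_append, List.pairwise_cons, List.pairwise_map, List.mem_cons,
      List.mem_map]
    refine ⟨(List.pairwise_append.mp hl).1, ⟨?_, hl₂.imp (by omega)⟩, ?_⟩
    · rintro _ ⟨e, he, rfl⟩; have := h₂ e he; omega
    · rintro a ha _ (rfl | ⟨e, he, rfl⟩)
      · exact h₁ a ha
      · have := h₁ a ha; have := h₂ e he; omega
  · simp [evalX_mul_xg_of_lt l₂ h₂, mul_assoc]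
  · simp only [Nval_eq_nfold, nfold_append, List.append_assoc, nfold_cons_map_succ l₂ h₂]

lemma exists_pairwise_evalX_eq_mul {l : List ℕ} (hl : l.Pairwise (· ≤ ·)) (P : List ℕ) :
    ∃ l', l'.Pairwise (· ≤ ·) ∧ evalX l' = evalX l * evalX P ∧ Nval l' = Nval (l ++ P) := by
  induction P generalizing l with
  | nil => exact ⟨l, hl, by simp, by simp⟩
  | cons q P ih =>
    obtain ⟨l₁, hl₁, he₁, hN₁⟩ := exists_pairwise_evalX_eq_mul_xg hl q
    obtain ⟨l', hl', he', hN'⟩ := ih hl₁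
    refine ⟨l', hl', by simp [he', he₁, mul_assoc], ?_⟩
    simp only [Nval_eq_nfold, nfold_append] at hN₁ hN' ⊢
    rw [hN', hN₁]
    rfl

lemma pairwise_append_map_succ {l₁ l₂ : List ℕ} (h : (l₁ ++ l₂).Pairwise (· ≤ ·)) :
    (l₁ ++ l₂.map (· + 1)).Pairwise (· ≤ ·) := by
  obtain ⟨h₁, h₂, h₁₂⟩ := List.pairwise_append.mp h
  refine List.pairwise_append.mpr ⟨h₁, List.pairwise_map.mpr (h₂.imp (by omega)), ?_⟩
  simp only [List.mem_map]
  rintro a ha _ ⟨e, he, rfl⟩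
  exact (h₁₂ a ha e he).trans (Nat.le_succ e)

lemma Nval_append_map_succ_le (l₁ l₂ : List ℕ) :
    Nval (l₁ ++ l₂.map (· + 1)) ≤ Nval (l₁ ++ l₂) + 1 := by
  simp only [Nval_eq_nfold, nfold_append]
  exact nfold_map_succ_le _ (Nat.le_succ _)

end SortedWords

section BraidWords

@[simp] lemma x_notMem_BnGen (i m : ℕ) : BVGen.x i ∉ BnGen m := by
  simp [BnGen]

@[simp] lemma s_mem_BnGen {i m : ℕ} : BVGen.s i ∈ BnGen m ↔ i + 3 ≤ m := by
  simp only [BnGen, Set.mem_ofPred_eq, BVGen.s.injEq, reduceCtorEq, and_false, or_false]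
  exact ⟨fun ⟨i', h₁, h₂, h⟩ => by omega, fun h => ⟨i + 1, by omega, by omega, rfl⟩⟩

@[simp] lemma t_mem_BnGen {i m : ℕ} : BVGen.t i ∈ BnGen m ↔ m = i + 2 := by
  simp only [BnGen, Set.mem_ofPred_eq, BVGen.t.injEq, reduceCtorEq, and_false, exists_false,
    false_or]
  omega

/-- With no incoming `x`, the letter `τ_{m-1}` still has to move up a level and emits `x_{m-2}`
by (D3). -/
lemma exists_evalLetter_mul_evalX {m : ℕ} {g : BVGen} (hg : g ∈ BnGen m) (b : Bool)
    {o : Option ℕ} (ho : ∀ j ∈ o, j + 2 ≤ m) :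
    ∃ (o' : Option ℕ) (u : List (BVGen × Bool)), (∀ j ∈ o', j + 2 ≤ m) ∧
      (∀ p ∈ u, p.1 ∈ BnGen (m + 1)) ∧
      evalLetter (g, b) * evalX o.toList = evalX o'.toList * evalW u := by
  cases g with
  | x i => simp at hg
  | s i =>
    rw [s_mem_BnGen] at hg
    rcases o with _ | j
    · exact ⟨none, [(.s i, b)], by simp, by simp; omega, by simp⟩
    rcases lt_trichotomy j i with hji | rfl | hij
    · exact ⟨some j, [(.s (i + 1), b)], by simpa using ho, by simp; omega,
        by simpa using evalLetter_s_mul_xg_of_gt b hji⟩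
    · exact ⟨some (j + 1), [(.s j, b), (.s (j + 1), b)], by simp; omega, by simp; omega,
        by simpa [mul_assoc] using evalLetter_s_mul_xg_self b j⟩
    rcases (Nat.succ_le_of_lt hij).eq_or_lt with rfl | hij
    · exact ⟨some i, [(.s (i + 1), b), (.s i, b)], by simp; omega, by simp; omega,
        by simpa [mul_assoc] using evalLetter_s_mul_xg_succ b i⟩
    · exact ⟨some j, [(.s i, b)], by simpa using ho, by simp; omega,
        by simpa using evalLetter_s_mul_xg_of_lt b hij⟩
  | t i =>
    rw [t_mem_BnGen] at hg
    subst hg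
    rcases o with _ | j
    · exact ⟨some i, [(.t (i + 1), b), (.s i, b)], by simp, by simp,
        by simpa [mul_assoc] using evalLetter_t_eq b i⟩
    rcases (show j ≤ i by simpa using ho).eq_or_lt with rfl | hji
    · exact ⟨none, [(.s j, b), (.t (j + 1), b)], by simp, by simp,
        by simpa using evalLetter_t_mul_xg_self b j⟩
    · exact ⟨some j, [(.t (i + 1), b)], by simpa using ho, by simp,
        by simpa using evalLetter_t_mul_xg_of_lt b hji⟩

lemma exists_evalW_mul_evalX {m : ℕ} {W : List (BVGen × Bool)} (hW : ∀ p ∈ W, p.1 ∈ BnGen m)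
    {o : Option ℕ} (ho : ∀ j ∈ o, j + 2 ≤ m) :
    ∃ (o' : Option ℕ) (W' : List (BVGen × Bool)), (∀ j ∈ o', j + 2 ≤ m) ∧
      (∀ p ∈ W', p.1 ∈ BnGen (m + 1)) ∧
      evalW W * evalX o.toList = evalX o'.toList * evalW W' := by
  induction W generalizing o with
  | nil => exact ⟨o, [], ho, by simp, by simp⟩
  | cons p W ih =>
    obtain ⟨o₁, W₁, ho₁, hW₁, h₁⟩ := ih (fun q hq => hW q (List.mem_cons_of_mem p hq)) ho
    obtain ⟨o', u, ho', hu, h'⟩ := exists_evalLetter_mul_evalX (hW p List.mem_cons_self) p.2 ho₁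
    refine ⟨o', u ++ W₁, ho', fun q hq => ?_, ?_⟩
    · rcases List.mem_append.mp hq with hq | hq
      exacts [hu q hq, hW₁ q hq]
    · rw [evalW_cons, mul_assoc, h₁, ← mul_assoc, h', evalW_append, mul_assoc]

/-- Pushing `x_M` through a `B_m` word: first raise the level by D3 until `M ≤ m - 2`, then cross.
Each level contributes at most one `x` of index at most its level minus two, which bounds `N`. -/
lemma exists_evalW_mul_xg {m : ℕ} {W : List (BVGen × Bool)} (hW : ∀ p ∈ W, p.1 ∈ BnGen m)
    (M : ℕ) :
    ∃ (m' : ℕ) (P : List ℕ) (W' : List (BVGen × Bool)), m < m' ∧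
      (∀ p ∈ W', p.1 ∈ BnGen m') ∧ evalW W * xg M = evalX P * evalW W' ∧
      ∀ acc < m, nfold P acc < m' := by
  obtain ⟨d, hd⟩ : ∃ d, M + 2 ≤ m + d := ⟨M + 2, by omega⟩
  induction d generalizing m W with
  | zero =>
    obtain ⟨o', W', ho', hW', h⟩ := exists_evalW_mul_evalX hW (o := some M) (by simpa using hd)
    exact ⟨m + 1, o'.toList, W', by omega, hW', by simpa using h,
      fun acc hacc => nfold_toList_lt ho' hacc⟩
  | succ d ih =>
    obtain ⟨o₁, W₁, ho₁, hW₁, h₁⟩ := exists_evalW_mul_evalX hW (o := none) (by simp)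
    obtain ⟨m', P, W', hm', hW', h', hP⟩ := ih hW₁ (by omega)
    refine ⟨m', o₁.toList ++ P, W', by omega, hW', ?_, fun acc hacc => ?_⟩
    · rw [← mul_one (evalW W), ← evalX_nil, ← Option.toList_none, h₁, mul_assoc, h',
        evalX_append, mul_assoc]
    · rw [nfold_append]
      exact hP _ (nfold_toList_lt ho₁ hacc)

end BraidWords

namespace Block

lemma pairwise_w1 (b : Block) : b.w1.Pairwise (· ≤ ·) := List.isChain_iff_pairwise.mp b.h1

lemma pairwise_w3 (b : Block) : b.w3.Pairwise (· ≤ ·) := List.isChain_iff_pairwise.mp b.h3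

lemma Nval_w1_lt (b : Block) : Nval b.w1 < b.n := by have := b.hbound; omega

lemma Nval_w3_lt (b : Block) : Nval b.w3 < b.n := by have := b.hbound; omega

def ofPairwise (w1 : List ℕ) (w2 : List (BVGen × Bool)) (w3 : List ℕ) (n : ℕ)
    (h1 : w1.Pairwise (· ≤ ·)) (h3 : w3.Pairwise (· ≤ ·)) (h2 : ∀ p ∈ w2, p.1 ∈ BnGen n)
    (hN1 : Nval w1 < n) (hN3 : Nval w3 < n) : Block :=
  ⟨w1, w2, w3, n, List.isChain_iff_pairwise.mpr h1, List.isChain_iff_pairwise.mpr h3, h2,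
    Nat.succ_le_of_lt (max_lt hN1 hN3)⟩

def inv (b : Block) : Block where
  w1 := b.w3
  w2 := invWord b.w2
  w3 := b.w1
  n := b.n
  h1 := b.h3
  h3 := b.h1
  h2 p hp := b.h2 (p.1, !p.2) (mem_invWord hp)
  hbound := max_comm (Nval b.w1) (Nval b.w3) ▸ b.hbound

lemma eval_inv (b : Block) : b.inv.eval = b.eval⁻¹ := by
  simp [eval, inv, evalW_invWord, mul_assoc]

def dropW1Head (b : Block) : Block where
  w1 := b.w1.tail
  w2 := b.w2
  w3 := b.w3
  n := b.n
  h1 := b.h1.tail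
  h3 := b.h3
  h2 := b.h2
  hbound := (max_le_max_right _ (Nval_le_of_sublist (List.tail_sublist _))).trans_lt b.hbound

@[simp] lemma dropW1Head_w1 (b : Block) : b.dropW1Head.w1 = b.w1.tail := rfl

lemma eval_eq_xg_mul_dropW1Head {b : Block} {c : ℕ} {t : List ℕ} (h : b.w1 = c :: t) :
    b.eval = xg c * b.dropW1Head.eval := by
  simp [eval, dropW1Head, h, mul_assoc]

def dropW3Head (b : Block) : Block := b.inv.dropW1Head.inv

@[simp] lemma dropW3Head_w3 (b : Block) : b.dropW3Head.w3 = b.w3.tail := rfl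

lemma eval_eq_dropW3Head_mul_xg_inv {b : Block} {c : ℕ} {t : List ℕ} (h : b.w3 = c :: t) :
    b.eval = b.dropW3Head.eval * (xg c)⁻¹ := by
  rw [dropW3Head, eval_inv, ← inv_inv b.eval, ← eval_inv, eval_eq_xg_mul_dropW1Head (b := b.inv) h,
    mul_inv_rev]

lemma exists_eval_eq_eval_mul_xg (w : Block) (b : ℕ) :
    ∃ w' : Block, w'.eval = w.eval * xg b ∧ w'.w3.length ≤ w.w3.length := by
  rcases inv_evalX_mul_xg w.pairwise_w3 b with ⟨l₁, c, l₂, hw3, h⟩ | ⟨M, l₁, l₂, hw3, h⟩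
  · have hsub : (l₁ ++ l₂).Sublist w.w3 := hw3 ▸ (List.sublist_cons_self c l₂).append_left l₁
    refine ⟨ofPairwise w.w1 w.w2 (l₁ ++ l₂) w.n w.pairwise_w1 (w.pairwise_w3.sublist hsub) w.h2
      w.Nval_w1_lt ((Nval_le_of_sublist hsub).trans_lt w.Nval_w3_lt), ?_, hsub.length_le⟩
    simp only [eval, ofPairwise, mul_assoc, ← h]
  · obtain ⟨m', P, W', hm', hW', hW'eq, hP⟩ := exists_evalW_mul_xg w.h2 M
    obtain ⟨l', hl', hl'eq, hNl'⟩ := exists_pairwise_evalX_eq_mul w.pairwise_w1 P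
    have hN1 : Nval l' < m' := by
      rw [hNl', Nval_eq_nfold, nfold_append]
      exact hP _ w.Nval_w1_lt
    have hN3 : Nval (l₁ ++ l₂.map (· + 1)) < m' := by
      have := Nval_append_map_succ_le l₁ l₂
      have := w.Nval_w3_lt
      rw [hw3] at this
      omega
    refine ⟨ofPairwise l' W' (l₁ ++ l₂.map (· + 1)) m' hl'
      (pairwise_append_map_succ (hw3 ▸ w.pairwise_w3)) hW' hN1 hN3, ?_, by simp [ofPairwise, hw3]⟩
    simp only [eval, ofPairwise, hl'eq, mul_assoc, h, ← hW'eq]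

lemma exists_eval_eq_xg_inv_mul_eval (v : Block) (c : ℕ) :
    ∃ v' : Block, v'.eval = (xg c)⁻¹ * v.eval ∧ v'.w1.length ≤ v.w1.length := by
  obtain ⟨v', hv', hlen⟩ := v.inv.exists_eval_eq_eval_mul_xg c
  exact ⟨v'.inv, by rw [eval_inv, hv', eval_inv, mul_inv_rev, inv_inv], hlen⟩

end Block

end GBV

/-- Lemma (squish): the product of two blocks can be replaced by the product of
two blocks with strictly smaller `l(v₁') + l(w₃')`. -/
theorem bv_squish (w v : GBV.Block) (h : 1 ≤ w.w3.length + v.w1.length) :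
    ∃ w' v' : GBV.Block,
      w.eval * v.eval = w'.eval * v'.eval ∧
      v'.w1.length + w'.w3.length < v.w1.length + w.w3.length := by
  rcases hv : v.w1 with _ | ⟨b, _⟩
  · obtain ⟨c, t, hw⟩ : ∃ c t, w.w3 = c :: t :=
      List.exists_cons_of_length_pos (by simp only [hv, List.length_nil] at h; omega)
    obtain ⟨v', hv', hlen⟩ := v.exists_eval_eq_xg_inv_mul_eval c
    refine ⟨w.dropW3Head, v', ?_, ?_⟩
    · rw [w.eval_eq_dropW3Head_mul_xg_inv hw, hv', mul_assoc]
    · simp only [GBV.Block.dropW3Head_w3, hw, List.tail_cons, List.length_cons, hv,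
        List.length_nil] at hlen ⊢
      omega
  · obtain ⟨w', hw', hlen⟩ := w.exists_eval_eq_eval_mul_xg b
    refine ⟨w', v.dropW1Head, ?_, ?_⟩
    · rw [v.eval_eq_xg_mul_dropW1Head hv, ← mul_assoc, hw']
    · simp only [GBV.Block.dropW1Head_w1, hv, List.tail_cons, List.length_cons]
      omega
end

section
/- The assignment x_i ↦ x_i extends to a well-defined group homomorphism G_F → G_BV, and this homomorphism is injective; that is, the generators x_i generate a copy of Thompson's group F inside G_BV. -/
/-- The defining relations of Thompson's group `F`:
`x_j x_i = x_i x_{j+1}` for `j > i`. -/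
def fRels : Set (FreeGroup ℕ) :=
  { g | ∃ i j : ℕ, i < j ∧
      g = grel (FreeGroup.of j * FreeGroup.of i) (FreeGroup.of i * FreeGroup.of (j + 1)) }

/-- Thompson's group `F`, via its infinite presentation. -/
abbrev GF : Type := PresentedGroup fRels

/-!
Let `BV` act on the Cantor set `ℕ → Bool`: `x₀`, `σ₁`, `τ₁` by explicit prefix replacements, and
`x_{n+1}`, `σ_{k+2}`, `τ_{k+2}` as `x_n`, `σ_{k+1}`, `τ_{k+1}` acting on the half `1u`. The
relations of `BV` hold there, so it suffices that the induced action of `F` is faithful. Every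
element of `F` is `p q⁻¹` for positive words `p, q` (Ore condition), which can be taken sorted
using `x_j x_i = x_i x_{j+1}`. Each `x_n` moves every point weakly to the left in lexicographic
order, and `x_a` strictly moves `1^a 0 1 1 1 …`, which all `x_j` with `j > a` fix; so two sorted
words with different first letters act differently, and by cancellation distinct sorted words do.
-/

namespace ThompsonBV

open Equiv

abbrev Cantor := ℕ → Bool

def cons (b : Bool) (w : Cantor) : Cantor
  | 0 => b
  | n + 1 => w n

def tail (w : Cantor) : Cantor := fun n => w (n + 1)

@[simp] lemma cons_zero (b : Bool) (w : Cantor) : cons b w 0 = b := rfl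
@[simp] lemma cons_succ (b : Bool) (w : Cantor) (n : ℕ) : cons b w (n + 1) = w n := rfl

lemma cons_injective (b : Bool) : Function.Injective (cons b) :=
  fun _ _ h => funext fun n => congrFun h (n + 1)

lemma cons_head_tail (w : Cantor) : cons (w 0) (tail w) = w := by
  funext n; cases n <;> rfl

lemma cons_induction {P : Cantor → Prop} (h : ∀ b u, P (cons b u)) (w : Cantor) : P w :=
  cons_head_tail w ▸ h _ _

lemma cons₃_induction {P : Cantor → Prop}
    (h : ∀ b₁ b₂ b₃ u, P (cons b₁ (cons b₂ (cons b₃ u)))) (w : Cantor) : P w :=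
  cons_induction (fun _ => cons_induction fun _ => cons_induction fun _ _ => h _ _ _ _) w

lemma perm_ext_cons₃ {f g : Perm Cantor}
    (h : ∀ b₁ b₂ b₃ u, f (cons b₁ (cons b₂ (cons b₃ u))) = g (cons b₁ (cons b₂ (cons b₃ u)))) :
    f = g :=
  Equiv.ext (cons₃_induction h)

def consEquiv : Cantor ⊕ Cantor ≃ Cantor where
  toFun := Sum.elim (cons false) (cons true)
  invFun w := bif w 0 then .inr (tail w) else .inl (tail w)
  left_inv := by rintro (_ | _) <;> rfl
  right_inv := cons_induction fun b u => by cases b <;> rfl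

def rightBranch : Perm Cantor →* Perm Cantor :=
  (permCongrHom consEquiv).toMonoidHom.comp ((Perm.sumCongrHom _ _).comp (MonoidHom.inr _ _))

@[simp] lemma rightBranch_cons_false (f : Perm Cantor) (u : Cantor) :
    rightBranch f (cons false u) = cons false u := rfl

@[simp] lemma rightBranch_cons_true (f : Perm Cantor) (u : Cantor) :
    rightBranch f (cons true u) = cons true (f u) := rfl

def x₀ : Perm Cantor where
  toFun w := match w 0, w 1 with
    | false, _ => cons false w
    | true, false => cons false (cons true (tail (tail w)))
    | true, true => tail w
  invFun w := match w 0, w 1 with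
    | true, _ => cons true w
    | false, true => cons true (cons false (tail (tail w)))
    | false, false => tail w
  left_inv := cons₃_induction fun b₁ b₂ _ _ => by cases b₁ <;> cases b₂ <;> rfl
  right_inv := cons₃_induction fun b₁ b₂ _ _ => by cases b₁ <;> cases b₂ <;> rfl

def σ₁ : Perm Cantor :=
  Function.Involutive.toPerm
    (fun w => match w 0, w 1 with
      | false, _ => cons true w
      | true, false => tail w
      | true, true => w)
    (cons₃_induction fun b₁ b₂ _ _ => by cases b₁ <;> cases b₂ <;> rfl)

def τ₁ : Perm Cantor :=
  Function.Involutive.toPerm (fun w => cons (!w 0) (tail w))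
    (cons_induction fun b _ => by cases b <;> rfl)

@[simp] lemma x₀_cons_false (u : Cantor) : x₀ (cons false u) = cons false (cons false u) := rfl
@[simp] lemma x₀_cons_true_false (u : Cantor) :
    x₀ (cons true (cons false u)) = cons false (cons true u) := rfl
@[simp] lemma x₀_cons_true_true (u : Cantor) : x₀ (cons true (cons true u)) = cons true u := rfl
@[simp] lemma σ₁_cons_false (u : Cantor) : σ₁ (cons false u) = cons true (cons false u) := rfl
@[simp] lemma σ₁_cons_true_false (u : Cantor) : σ₁ (cons true (cons false u)) = cons false u := rfl
@[simp] lemma σ₁_cons_true_true (u : Cantor) :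
    σ₁ (cons true (cons true u)) = cons true (cons true u) := rfl
@[simp] lemma τ₁_cons (b : Bool) (u : Cantor) : τ₁ (cons b u) = cons (!b) u := rfl

lemma rightBranch_mul_x₀ (f : Perm Cantor) :
    rightBranch f * x₀ = x₀ * rightBranch (rightBranch f) :=
  perm_ext_cons₃ fun b₁ b₂ _ _ => by cases b₁ <;> cases b₂ <;> simp

lemma commute_σ₁_rightBranch_rightBranch (f : Perm Cantor) :
    Commute σ₁ (rightBranch (rightBranch f)) :=
  perm_ext_cons₃ fun b₁ b₂ _ _ => by cases b₁ <;> cases b₂ <;> simp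

lemma σ₁_braid_rightBranch_σ₁ :
    σ₁ * rightBranch σ₁ * σ₁ = rightBranch σ₁ * σ₁ * rightBranch σ₁ :=
  perm_ext_cons₃ fun b₁ b₂ b₃ _ => by cases b₁ <;> cases b₂ <;> cases b₃ <;> simp

lemma σ₁_braid_rightBranch_τ₁ :
    σ₁ * rightBranch τ₁ * σ₁ = rightBranch τ₁ * σ₁ * rightBranch τ₁ :=
  perm_ext_cons₃ fun b₁ b₂ b₃ _ => by cases b₁ <;> cases b₂ <;> cases b₃ <;> simp

lemma σ₁_mul_rightBranch_x₀ : σ₁ * rightBranch x₀ = x₀ * rightBranch σ₁ * σ₁ :=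
  perm_ext_cons₃ fun b₁ b₂ b₃ _ => by cases b₁ <;> cases b₂ <;> cases b₃ <;> simp

lemma σ₁_mul_x₀ : σ₁ * x₀ = rightBranch x₀ * σ₁ * rightBranch σ₁ :=
  perm_ext_cons₃ fun b₁ b₂ b₃ _ => by cases b₁ <;> cases b₂ <;> cases b₃ <;> simp

lemma τ₁_mul_x₀ : τ₁ * x₀ = σ₁ * rightBranch τ₁ :=
  perm_ext_cons₃ fun b₁ b₂ _ _ => by cases b₁ <;> cases b₂ <;> simp

lemma τ₁_eq : τ₁ = x₀ * rightBranch τ₁ * σ₁ :=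
  perm_ext_cons₃ fun b₁ b₂ _ _ => by cases b₁ <;> cases b₂ <;> simp

/-- `xPerm n`, `sigmaPerm k` and `tauPerm k` realize `x_n`, `σ_{k+1}` and `τ_{k+1}`. -/
def xPerm (n : ℕ) : Perm Cantor := rightBranch^[n] x₀

def sigmaPerm (k : ℕ) : Perm Cantor := rightBranch^[k] σ₁

def tauPerm (k : ℕ) : Perm Cantor := rightBranch^[k] τ₁

lemma iterate_rightBranch_mul_xPerm {j k : ℕ} (h : j < k) (g : Perm Cantor) :
    rightBranch^[k] g * xPerm j = xPerm j * rightBranch^[k + 1] g := by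
  obtain ⟨d, rfl⟩ : ∃ d, k = j + (d + 1) := ⟨k - (j + 1), by omega⟩
  have := congrArg rightBranch^[j] (rightBranch_mul_x₀ (rightBranch^[d] g))
  simp only [iterate_map_mul, ← Function.iterate_succ_apply' rightBranch,
    ← Function.iterate_add_apply] at this
  exact this

lemma commute_sigmaPerm_iterate_rightBranch {j k : ℕ} (h : j + 2 ≤ k) (g : Perm Cantor) :
    Commute (sigmaPerm j) (rightBranch^[k] g) := by
  obtain ⟨d, rfl⟩ : ∃ d, k = j + (d + 2) := ⟨k - (j + 2), by omega⟩
  have := congrArg rightBranch^[j] (commute_σ₁_rightBranch_rightBranch (rightBranch^[d] g)).eq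
  simp only [iterate_map_mul, ← Function.iterate_succ_apply' rightBranch,
    ← Function.iterate_add_apply] at this
  exact this

lemma sigmaPerm_braid (k : ℕ) :
    sigmaPerm k * sigmaPerm (k + 1) * sigmaPerm k =
      sigmaPerm (k + 1) * sigmaPerm k * sigmaPerm (k + 1) := by
  simpa only [sigmaPerm, iterate_map_mul, ← Function.iterate_succ_apply]
    using congrArg rightBranch^[k] σ₁_braid_rightBranch_σ₁

lemma sigmaPerm_braid_tauPerm (k : ℕ) :
    sigmaPerm k * tauPerm (k + 1) * sigmaPerm k =
      tauPerm (k + 1) * sigmaPerm k * tauPerm (k + 1) := by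
  simpa only [sigmaPerm, tauPerm, iterate_map_mul, ← Function.iterate_succ_apply]
    using congrArg rightBranch^[k] σ₁_braid_rightBranch_τ₁

lemma sigmaPerm_mul_xPerm_succ (k : ℕ) :
    sigmaPerm k * xPerm (k + 1) = xPerm k * sigmaPerm (k + 1) * sigmaPerm k := by
  simpa only [sigmaPerm, xPerm, iterate_map_mul, ← Function.iterate_succ_apply]
    using congrArg rightBranch^[k] σ₁_mul_rightBranch_x₀

lemma sigmaPerm_mul_xPerm (k : ℕ) :
    sigmaPerm k * xPerm k = xPerm (k + 1) * sigmaPerm k * sigmaPerm (k + 1) := by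
  simpa only [sigmaPerm, xPerm, iterate_map_mul, ← Function.iterate_succ_apply]
    using congrArg rightBranch^[k] σ₁_mul_x₀

lemma tauPerm_mul_xPerm (k : ℕ) : tauPerm k * xPerm k = sigmaPerm k * tauPerm (k + 1) := by
  simpa only [sigmaPerm, tauPerm, xPerm, iterate_map_mul, ← Function.iterate_succ_apply]
    using congrArg rightBranch^[k] τ₁_mul_x₀

lemma tauPerm_eq (k : ℕ) : tauPerm k = xPerm k * tauPerm (k + 1) * sigmaPerm k := by
  simpa only [sigmaPerm, tauPerm, xPerm, iterate_map_mul, ← Function.iterate_succ_apply]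
    using congrArg rightBranch^[k] τ₁_eq

def bvGenPerm : BVGen → Perm Cantor
  | .x n => xPerm n
  | .s k => sigmaPerm k
  | .t k => tauPerm k

lemma lift_bvGenPerm_of_mem_bvRels : ∀ r ∈ BVGen.bvRels, FreeGroup.lift bvGenPerm r = 1 := by
  rintro r (⟨i, j, hij, rfl⟩ | ⟨i, j, hi, hij, rfl⟩ | ⟨i, hi, rfl⟩ | ⟨i, j, hi, hij, rfl⟩ |
    ⟨i, hi, rfl⟩ | ⟨i, j, hi, hij, rfl⟩ | ⟨i, hi, rfl⟩ | ⟨i, j, hji, rfl⟩ | ⟨i, rfl⟩ |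
    ⟨i, j, hji, rfl⟩ | ⟨i, hi, rfl⟩ | ⟨i, hi, rfl⟩) <;>
    simp only [grel, BVGen.X, BVGen.S, BVGen.T, map_mul, map_inv, FreeGroup.lift_apply_of,
      bvGenPerm, mul_inv_eq_one]
  · exact iterate_rightBranch_mul_xPerm hij x₀
  · exact commute_sigmaPerm_iterate_rightBranch (by omega) σ₁
  · rw [show i + 1 - 1 = i - 1 + 1 by omega]
    exact sigmaPerm_braid _
  · exact commute_sigmaPerm_iterate_rightBranch (by omega) τ₁
  · rw [show i + 1 - 1 = i - 1 + 1 by omega]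
    exact sigmaPerm_braid_tauPerm _
  · exact commute_sigmaPerm_iterate_rightBranch (by omega) x₀
  · obtain ⟨k, rfl⟩ : ∃ k, i = k + 1 := ⟨i - 1, by omega⟩
    exact sigmaPerm_mul_xPerm_succ k
  · rw [show i + 1 - 1 = i - 1 + 1 by omega]
    exact iterate_rightBranch_mul_xPerm (by omega) σ₁
  · exact sigmaPerm_mul_xPerm i
  · rw [show i + 1 - 1 = i - 1 + 1 by omega]
    exact iterate_rightBranch_mul_xPerm (by omega) τ₁
  · rw [show i + 1 - 1 = i - 1 + 1 by omega]
    exact tauPerm_mul_xPerm _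
  · rw [show i + 1 - 1 = i - 1 + 1 by omega]
    exact tauPerm_eq _

def bvToPerm : GBV →* Perm Cantor := PresentedGroup.toGroup lift_bvGenPerm_of_mem_bvRels

lemma xg_mul_xg {i j : ℕ} (h : i < j) : GBV.xg j * GBV.xg i = GBV.xg i * GBV.xg (j + 1) := by
  have := PresentedGroup.mk_eq_mk_of_mul_inv_mem (rels := BVGen.bvRels) (Or.inl ⟨i, j, h, rfl⟩)
  rwa [map_mul, map_mul] at this

def fToBV : GF →* GBV :=
  PresentedGroup.toGroup (f := GBV.xg) <| by
    rintro _ ⟨i, j, h, rfl⟩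
    simpa only [grel, map_mul, map_inv, FreeGroup.lift_apply_of, mul_inv_eq_one] using xg_mul_xg h

lemma fToBV_of (i : ℕ) : fToBV (PresentedGroup.of i) = GBV.xg i := PresentedGroup.toGroup.of _

lemma bvToPerm_fToBV_of (i : ℕ) : bvToPerm (fToBV (PresentedGroup.of i)) = xPerm i := by
  rw [fToBV_of]
  exact PresentedGroup.toGroup.of _

lemma cons_apply_eq_of_forall_lt {b : Bool} {u : Cantor} {i : ℕ}
    (h : ∀ j < i, cons b u j = u j) : ∀ j ≤ i, cons b u j = b
  | 0, _ => rfl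
  | j + 1, hj => (h j hj).symm.trans (cons_apply_eq_of_forall_lt h j (by omega))

lemma toLex_cons_false_le (u : Cantor) : toLex (cons false u) ≤ toLex u := by
  refine not_lt.1 fun ⟨i, hi, (hlt : u i < cons false u i)⟩ => ?_
  rw [cons_apply_eq_of_forall_lt (fun j hj => (hi j hj).symm) i le_rfl] at hlt
  exact not_lt_bot hlt

lemma toLex_le_cons_true (u : Cantor) : toLex u ≤ toLex (cons true u) := by
  refine not_lt.1 fun ⟨i, hi, (hlt : cons true u i < u i)⟩ => ?_
  rw [cons_apply_eq_of_forall_lt hi i le_rfl] at hlt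
  exact not_top_lt hlt

lemma toLex_cons_false_lt_cons_true (u v : Cantor) : toLex (cons false u) < toLex (cons true v) :=
  ⟨0, fun _ h => absurd h (Nat.not_lt_zero _), Bool.false_lt_true⟩

lemma toLex_cons_le_cons (b : Bool) {u v : Cantor} (h : toLex u ≤ toLex v) :
    toLex (cons b u) ≤ toLex (cons b v) := by
  rcases h.lt_or_eq with ⟨i, hi, hlt⟩ | h
  · refine le_of_lt ⟨i + 1, fun j hj => ?_, hlt⟩
    cases j with
    | zero => rfl
    | succ j => exact hi j (by omega)
  · rw [toLex_inj.1 h]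

def lexDeflationary : Submonoid (Perm Cantor) where
  carrier := {f | ∀ w, toLex (f w) ≤ toLex w}
  mul_mem' hf hg w := (hf _).trans (hg w)
  one_mem' _ := le_rfl

lemma x₀_mem_lexDeflationary : x₀ ∈ lexDeflationary :=
  cons₃_induction fun b₁ b₂ _ _ => by
    cases b₁
    · exact toLex_cons_le_cons false (toLex_cons_false_le _)
    cases b₂
    · exact (toLex_cons_false_lt_cons_true _ _).le
    · exact toLex_cons_le_cons true (toLex_le_cons_true _)

lemma rightBranch_mem_lexDeflationary {f : Perm Cantor} (hf : f ∈ lexDeflationary) :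
    rightBranch f ∈ lexDeflationary :=
  cons_induction fun b u => by
    cases b
    · exact le_rfl
    · exact toLex_cons_le_cons true (hf u)

lemma xPerm_mem_lexDeflationary (n : ℕ) : xPerm n ∈ lexDeflationary := by
  induction n with
  | zero => exact x₀_mem_lexDeflationary
  | succ n ih =>
    rw [xPerm, Function.iterate_succ_apply']
    exact rightBranch_mem_lexDeflationary ih

lemma iterate_rightBranch_apply_iterate_cons_true (a : ℕ) (f : Perm Cantor) (v : Cantor) :
    rightBranch^[a] f ((cons true)^[a] v) = (cons true)^[a] (f v) := by
  induction a with
  | zero => rfl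
  | succ a ih =>
    simp only [Function.iterate_succ_apply', rightBranch_cons_true, ih]

/-- `1^a 0 1 1 1 …`; unlike `1^a 0 0 0 …`, it is moved by `x_a`. -/
def basePoint (a : ℕ) : Cantor := (cons true)^[a] (cons false fun _ => true)

lemma xPerm_apply_basePoint_ne (a : ℕ) : xPerm a (basePoint a) ≠ basePoint a := by
  rw [xPerm, basePoint, iterate_rightBranch_apply_iterate_cons_true, x₀_cons_false]
  refine fun h => ?_
  have := congrFun ((cons_injective _).iterate a h) 1
  simp at this

lemma xPerm_mem_stabilizer_basePoint {a j : ℕ} (h : a < j) :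
    xPerm j ∈ MulAction.stabilizer (Perm Cantor) (basePoint a) := by
  obtain ⟨d, rfl⟩ : ∃ d, j = a + (d + 1) := ⟨j - (a + 1), by omega⟩
  rw [MulAction.mem_stabilizer_iff, Perm.smul_def, xPerm, Function.iterate_add_apply,
    basePoint, iterate_rightBranch_apply_iterate_cons_true, Function.iterate_succ_apply',
    rightBranch_cons_false]

/-- Both factors move points weakly to the left, so `x_a * f` can only fix `basePoint a` if both
of them do. -/
lemma xPerm_mul_ne {a : ℕ} {f g : Perm Cantor} (hf : f ∈ lexDeflationary)
    (hg : g ∈ MulAction.stabilizer (Perm Cantor) (basePoint a)) : xPerm a * f ≠ g := by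
  intro h
  have hfix : xPerm a (f (basePoint a)) = basePoint a := by
    rw [← Perm.mul_apply, h]
    exact hg
  have hx := xPerm_mem_lexDeflationary a (f (basePoint a))
  rw [hfix] at hx
  have hf_fix : f (basePoint a) = basePoint a := toLex_inj.1 ((hf _).antisymm hx)
  rw [hf_fix] at hfix
  exact xPerm_apply_basePoint_ne a hfix

lemma xPerm_mul_prod_ne {a : ℕ} (t : List ℕ) {l : List ℕ} (hl : ∀ j ∈ l, a < j) :
    xPerm a * (t.map xPerm).prod ≠ (l.map xPerm).prod :=
  xPerm_mul_ne (Submonoid.list_prod_mem _ (by simp [xPerm_mem_lexDeflationary]))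
    (Subgroup.list_prod_mem _ (by simpa using fun j hj => xPerm_mem_stabilizer_basePoint (hl j hj)))

theorem eq_of_prod_map_xPerm_eq : ∀ {l₁ l₂ : List ℕ}, l₁.Pairwise (· ≤ ·) →
    l₂.Pairwise (· ≤ ·) → (l₁.map xPerm).prod = (l₂.map xPerm).prod → l₁ = l₂
  | [], [], _, _, _ => rfl
  | [], b :: t, _, _, h => (xPerm_mul_prod_ne t (l := []) (a := b) (by simp) h.symm).elim
  | a :: t, [], _, _, h => (xPerm_mul_prod_ne t (l := []) (a := a) (by simp) h).elim
  | a :: t₁, b :: t₂, h₁, h₂, h => by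
    rw [List.pairwise_cons] at h₁ h₂
    simp only [List.map_cons, List.prod_cons] at h
    rcases lt_trichotomy a b with hab | rfl | hab
    · refine (xPerm_mul_prod_ne t₁ (l := b :: t₂) ?_ (by simpa using h)).elim
      simpa using ⟨hab, fun j hj => hab.trans_le (h₂.1 j hj)⟩
    · rw [eq_of_prod_map_xPerm_eq h₁.2 h₂.2 (mul_left_cancel h)]
    · refine (xPerm_mul_prod_ne t₂ (l := a :: t₁) ?_ (by simpa using h.symm)).elim
      simpa using ⟨hab, fun j hj => hab.trans_le (h₁.1 j hj)⟩

lemma of_mul_of_of_lt {i j : ℕ} (h : i < j) :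
    (PresentedGroup.of j : GF) * PresentedGroup.of i =
      PresentedGroup.of i * PresentedGroup.of (j + 1) := by
  have := PresentedGroup.mk_eq_mk_of_mul_inv_mem (rels := fRels) ⟨i, j, h, rfl⟩
  rwa [map_mul, map_mul] at this

def posWord (l : List ℕ) : GF := (l.map PresentedGroup.of).prod

@[simp] lemma posWord_nil : posWord [] = 1 := rfl

@[simp] lemma posWord_cons (i : ℕ) (l : List ℕ) :
    posWord (i :: l) = PresentedGroup.of i * posWord l := List.prod_cons

lemma posWord_append (l₁ l₂ : List ℕ) : posWord (l₁ ++ l₂) = posWord l₁ * posWord l₂ := by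
  simp [posWord]

/-- Inserting `x_i` into a sorted positive word: it passes a smaller letter `x_j` as
`x_i x_j = x_j x_{i+1}`. -/
def insertShift (i : ℕ) : List ℕ → List ℕ
  | [] => [i]
  | j :: t => if i ≤ j then i :: j :: t else j :: insertShift (i + 1) t

lemma posWord_insertShift (i : ℕ) (l : List ℕ) :
    posWord (insertShift i l) = PresentedGroup.of i * posWord l := by
  induction l generalizing i with
  | nil => simp [insertShift]
  | cons j t ih =>
    unfold insertShift
    split_ifs with h
    · rfl
    · rw [posWord_cons, ih, posWord_cons, ← mul_assoc, ← mul_assoc, ← of_mul_of_of_lt (by omega)]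

lemma le_of_mem_insertShift {b i : ℕ} {l : List ℕ} (hi : b ≤ i) (hl : ∀ a ∈ l, b ≤ a) :
    ∀ a ∈ insertShift i l, b ≤ a := by
  induction l generalizing i with
  | nil => simpa [insertShift]
  | cons j t ih =>
    simp only [List.forall_mem_cons] at hl
    unfold insertShift
    split_ifs
    · simpa [hi] using hl
    · simpa [hl.1] using ih (by omega) hl.2

lemma pairwise_insertShift (i : ℕ) {l : List ℕ} (hl : l.Pairwise (· ≤ ·)) :
    (insertShift i l).Pairwise (· ≤ ·) := by
  induction l generalizing i with
  | nil => simp [insertShift]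
  | cons j t ih =>
    rw [List.pairwise_cons] at hl
    unfold insertShift
    split_ifs with h
    · exact List.pairwise_cons.2 ⟨List.forall_mem_cons.2 ⟨h, fun a ha => h.trans (hl.1 a ha)⟩,
        List.pairwise_cons.2 hl⟩
    · exact List.pairwise_cons.2 ⟨le_of_mem_insertShift (by omega) hl.1, ih (i + 1) hl.2⟩

lemma exists_pairwise_posWord_eq (l : List ℕ) :
    ∃ l', l'.Pairwise (· ≤ ·) ∧ posWord l' = posWord l := by
  induction l with
  | nil => exact ⟨[], List.Pairwise.nil, rfl⟩
  | cons i t ih =>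
    obtain ⟨t', ht', he⟩ := ih
    refine ⟨insertShift i t', pairwise_insertShift i ht', ?_⟩
    rw [posWord_insertShift, he, posWord_cons]

lemma exists_posWord_mul_eq_of_mul (q : List ℕ) (i : ℕ) :
    ∃ a b, posWord q * posWord a = PresentedGroup.of i * posWord b := by
  induction q generalizing i with
  | nil => exact ⟨[i], [], by simp⟩
  | cons j t ih =>
    rcases lt_trichotomy j i with h | rfl | h
    · obtain ⟨a, b, hab⟩ := ih (i + 1)
      refine ⟨a, j :: b, ?_⟩
      rw [posWord_cons, posWord_cons, mul_assoc, hab, ← mul_assoc, ← of_mul_of_of_lt h, mul_assoc]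
    · exact ⟨[], t, by simp⟩
    · obtain ⟨a, b, hab⟩ := ih i
      refine ⟨a, (j + 1) :: b, ?_⟩
      rw [posWord_cons, posWord_cons, mul_assoc, hab, ← mul_assoc, of_mul_of_of_lt h, mul_assoc]

lemma exists_eq_posWord_mul_inv (g : GF) : ∃ p q, g = posWord p * (posWord q)⁻¹ := by
  have hg : g ∈ Subgroup.closure (Set.range PresentedGroup.of) := by
    rw [PresentedGroup.closure_range_of]
    trivial
  induction hg using Subgroup.closure_induction_right with
  | one => exact ⟨[], [], by simp⟩
  | mul_right _ _ _ hy ih =>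
    obtain ⟨i, rfl⟩ := hy
    obtain ⟨p, q, rfl⟩ := ih
    obtain ⟨a, b, hab⟩ := exists_posWord_mul_eq_of_mul q i
    refine ⟨p ++ a, b, ?_⟩
    rw [posWord_append, mul_assoc, mul_assoc]
    congr 1
    rw [inv_mul_eq_iff_eq_mul, ← mul_assoc, hab, mul_inv_cancel_right]
  | mul_inv_cancel _ _ _ hy ih =>
    obtain ⟨i, rfl⟩ := hy
    obtain ⟨p, q, rfl⟩ := ih
    exact ⟨p, i :: q, by rw [posWord_cons, mul_inv_rev, mul_assoc]⟩

theorem injective_of_map_of_eq_xPerm (ρ : GF →* Perm Cantor)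
    (hρ : ∀ i, ρ (PresentedGroup.of i) = xPerm i) : Function.Injective ρ := by
  have hρ_posWord (l : List ℕ) : ρ (posWord l) = (l.map xPerm).prod := by
    simp [posWord, map_list_prod, Function.comp_def, hρ]
  refine (injective_iff_map_eq_one ρ).2 fun g hg => ?_
  obtain ⟨p, q, rfl⟩ := exists_eq_posWord_mul_inv g
  obtain ⟨p', hp', hpp'⟩ := exists_pairwise_posWord_eq p
  obtain ⟨q', hq', hqq'⟩ := exists_pairwise_posWord_eq q
  rw [map_mul, map_inv, mul_inv_eq_one, ← hpp', ← hqq', hρ_posWord, hρ_posWord] at hg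
  rw [mul_inv_eq_one, ← hpp', ← hqq', eq_of_prod_map_xPerm_eq hp' hq' hg]

end ThompsonBV

/-- The assignment `x_i ↦ x_i` extends to a well-defined group homomorphism
`F → BV`, and this homomorphism is injective. -/
theorem f_to_bv_injective :
    ∃ φ : GF →* GBV,
      (∀ i : ℕ, φ (PresentedGroup.of i) = GBV.xg i) ∧ Function.Injective φ :=
  ⟨ThompsonBV.fToBV, ThompsonBV.fToBV_of, Function.Injective.of_comp (f := ThompsonBV.bvToPerm) <|
    ThompsonBV.injective_of_map_of_eq_xPerm (ThompsonBV.bvToPerm.comp ThompsonBV.fToBV)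
      ThompsonBV.bvToPerm_fToBV_of⟩
end
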